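/- arXiv:2105.01690 — 4 statements merged into one kernel-verified Lean document; each statement's English description precedes it below -/
import Mathlib

section
/- The relation distance d is a pseudometric on relations over a fixed finite set X: it is nonnegative, symmetric, satisfies d(r,r) = 0, and satisfies the triangle inequality d(r₁,r₃) ≤ d(r₁,r₂) + d(r₂,r₃). -/
/-- Weight of a function `g` between relation objects `(Y1,R1)` and `(Y2,R2)` over `X`. -/
def wgt {X Y1 Y2 : Type*} [Fintype X] [Fintype Y1] [Fintype Y2] [DecidableEq Y2]
    (R1 : X → Y1 → Bool) (R2 : X → Y2 → Bool) (g : Y1 → Y2) : ℕ :=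
  Finset.univ.sup (fun x : X =>
    (Finset.univ \ Finset.image g Finset.univ).card
    + (Finset.univ.filter (fun y : Y1 => R1 x y ≠ R2 x (g y))).card)

/-- The relation distance between `(Y1,R1)` and `(Y2,R2)` over `X`. -/
noncomputable def ddist {X Y1 Y2 : Type*} [Fintype X] [Fintype Y1] [Fintype Y2]
    [DecidableEq Y1] [DecidableEq Y2]
    (R1 : X → Y1 → Bool) (R2 : X → Y2 → Bool) : ℕ :=
  max (sInf {n | ∃ g : Y1 → Y2, n = wgt R1 R2 g})
      (sInf {n | ∃ g : Y2 → Y1, n = wgt R2 R1 g})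

/-!
Symmetry and reflexivity are immediate. For the triangle inequality, maps add their weights under
composition as soon as the first one is injective, and a map into a type that is at least as large
can always be made injective without increasing its weight: redirecting one of two colliding points
to a missed point removes a missed point and creates at most one new mismatch. If `Y₁` is larger
than `Y₂`, take instead an injective map `Y₂ → Y₁` and compose a left inverse of it with a map
`Y₂ → Y₃`; the points of `Y₁` outside its image are paid for by its missed points.
-/

open Finset Function

section Weight

variable {X Y₁ Y₂ Y₃ : Type*} [Fintype Y₁] (R₁ : X → Y₁ → Bool) (R₂ : X → Y₂ → Bool)

def missed [Fintype Y₂] [DecidableEq Y₂] (g : Y₁ → Y₂) : Finset Y₂ :=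
  univ \ univ.image g

def mismatches (g : Y₁ → Y₂) (x : X) : Finset Y₁ :=
  univ.filter fun y => R₁ x y ≠ R₂ x (g y)

lemma mismatches_update_subset [DecidableEq Y₁] (g : Y₁ → Y₂) (y : Y₁) (z : Y₂) (x : X) :
    mismatches R₁ R₂ (update g y z) x ⊆ insert y (mismatches R₁ R₂ g x) := by
  intro a ha
  by_cases hay : a = y
  · exact mem_insert.mpr (Or.inl hay)
  · simp_all [mismatches]

variable (R₃ : X → Y₃ → Bool)

lemma card_mismatches_comp_le_of_injective [Fintype Y₂] {g₁ : Y₁ → Y₂} (hg₁ : Injective g₁)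
    (g₂ : Y₂ → Y₃) (x : X) :
    #(mismatches R₁ R₃ (g₂ ∘ g₁) x) ≤ #(mismatches R₁ R₂ g₁ x) + #(mismatches R₂ R₃ g₂ x) := by
  classical
  calc #(mismatches R₁ R₃ (g₂ ∘ g₁) x)
      ≤ #(mismatches R₁ R₂ g₁ x ∪ (mismatches R₂ R₃ g₂ x).preimage g₁ hg₁.injOn) := by
        refine card_le_card fun a ha => ?_
        simp only [mismatches, mem_union, mem_filter, mem_preimage, mem_univ, true_and,
          comp_apply] at ha ⊢
        by_contra! h
        exact ha (h.1.trans h.2)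
    _ ≤ #(mismatches R₁ R₂ g₁ x) + #(mismatches R₂ R₃ g₂ x) :=
        (card_union_le _ _).trans (by
          gcongr
          exact card_le_card_of_injOn g₁ (fun a ha => by simpa using ha) hg₁.injOn)

lemma card_mismatches_comp_invFun_le [Fintype Y₂] [DecidableEq Y₁] [Nonempty Y₂] {g : Y₂ → Y₁}
    (hg : Injective g) (g₂ : Y₂ → Y₃) (x : X) :
    #(mismatches R₁ R₃ (g₂ ∘ invFun g) x)
      ≤ #(missed g) + #(mismatches R₂ R₁ g x) + #(mismatches R₂ R₃ g₂ x) :=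
  calc #(mismatches R₁ R₃ (g₂ ∘ invFun g) x)
      ≤ #(missed g ∪ (mismatches R₂ R₁ g x).image g ∪ (mismatches R₂ R₃ g₂ x).image g) := by
        refine card_le_card fun a ha => ?_
        by_cases haim : a ∈ univ.image g
        · obtain ⟨b, -, rfl⟩ := mem_image.mp haim
          simp only [mismatches, mem_filter, mem_univ, true_and, comp_apply,
            leftInverse_invFun hg b] at ha
          simp only [mismatches, mem_union, mem_image, mem_filter, mem_univ, true_and]
          by_cases h : R₂ x b = R₁ x (g b)
          · exact Or.inr ⟨b, fun h' => ha (h.symm.trans h'), rfl⟩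
          · exact Or.inl (Or.inr ⟨b, h, rfl⟩)
        · exact mem_union_left _ (mem_union_left _ (by simpa [missed] using haim))
    _ ≤ #(missed g ∪ (mismatches R₂ R₁ g x).image g) + #((mismatches R₂ R₃ g₂ x).image g) :=
        card_union_le _ _
    _ ≤ #(missed g) + #((mismatches R₂ R₁ g x).image g) + #((mismatches R₂ R₃ g₂ x).image g) :=
        Nat.add_le_add_right (card_union_le _ _) _
    _ ≤ #(missed g) + #(mismatches R₂ R₁ g x) + #(mismatches R₂ R₃ g₂ x) := by
        gcongr <;> exact card_image_le

variable [Fintype X] [Fintype Y₂] [Fintype Y₃] [DecidableEq Y₂]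

lemma wgt_le_iff {g : Y₁ → Y₂} {n : ℕ} :
    wgt R₁ R₂ g ≤ n ↔ ∀ x, #(missed g) + #(mismatches R₁ R₂ g x) ≤ n := by
  simp [wgt, missed, mismatches]

lemma card_missed_add_card_mismatches_le_wgt (g : Y₁ → Y₂) (x : X) :
    #(missed g) + #(mismatches R₁ R₂ g x) ≤ wgt R₁ R₂ g :=
  (wgt_le_iff R₁ R₂).mp le_rfl x

lemma wgt_id : wgt R₂ R₂ id = 0 :=
  Nat.le_zero.mp <| (wgt_le_iff R₂ R₂).mpr fun x => by simp [missed, mismatches]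

section Update

variable [DecidableEq Y₁] {g : Y₁ → Y₂} {y y' : Y₁} {z : Y₂}

lemma card_missed_update_lt (hne : y ≠ y') (hgy : g y = g y') (hz : z ∈ missed g) :
    #(missed (update g y z)) < #(missed g) := by
  refine card_lt_card ((ssubset_iff_of_subset ?_).mpr
    ⟨z, hz, by simpa [missed] using ⟨y, by simp⟩⟩)
  intro b hb
  simp only [missed, mem_sdiff, mem_univ, mem_image, true_and, not_exists] at hb ⊢
  intro a hab
  by_cases hay : a = y
  · subst hay
    exact hb y' (by rw [update_of_ne hne.symm, ← hgy, hab])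
  · exact hb a (by rw [update_of_ne hay, hab])

lemma wgt_update_le (hne : y ≠ y') (hgy : g y = g y') (hz : z ∈ missed g) :
    wgt R₁ R₂ (update g y z) ≤ wgt R₁ R₂ g := by
  refine (wgt_le_iff R₁ R₂).mpr fun x => ?_
  have hmissed := card_missed_update_lt hne hgy hz
  have hmismatches :=
    (card_le_card (mismatches_update_subset R₁ R₂ g y z x)).trans (card_insert_le _ _)
  have := card_missed_add_card_mismatches_le_wgt R₁ R₂ g x
  omega

end Update

lemma missed_nonempty_of_not_injective (hcard : Fintype.card Y₁ ≤ Fintype.card Y₂) {g : Y₁ → Y₂}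
    (hg : ¬Injective g) : (missed g).Nonempty := by
  by_contra hempty
  have himage : univ.image g = univ := by
    simpa [missed, sdiff_eq_empty_iff_subset, univ_subset_iff] using hempty
  have hcard_image : #(univ.image g) = #(univ : Finset Y₁) :=
    le_antisymm card_image_le (by rw [himage, card_univ, card_univ]; exact hcard)
  exact hg (Set.injOn_univ.mp (by simpa using card_image_iff.mp hcard_image))

lemma exists_injective_wgt_le (hcard : Fintype.card Y₁ ≤ Fintype.card Y₂) (g : Y₁ → Y₂) :
    ∃ g' : Y₁ → Y₂, Injective g' ∧ wgt R₁ R₂ g' ≤ wgt R₁ R₂ g := by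
  classical
  obtain ⟨g', hg', hmin⟩ := Set.exists_min_image {g' | wgt R₁ R₂ g' ≤ wgt R₁ R₂ g}
    (fun g' => #(missed g')) (Set.toFinite _) ⟨g, le_refl (wgt R₁ R₂ g)⟩
  refine ⟨g', by_contra fun hinj => ?_, hg'⟩
  obtain ⟨y, y', hgy, hne⟩ := not_injective_iff.mp hinj
  obtain ⟨z, hz⟩ := missed_nonempty_of_not_injective hcard hinj
  exact (hmin _ ((wgt_update_le R₁ R₂ hne hgy hz).trans hg')).not_gt
    (card_missed_update_lt hne hgy hz)

variable [DecidableEq Y₃]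

lemma card_missed_comp_le (g₁ : Y₁ → Y₂) (g₂ : Y₂ → Y₃) :
    #(missed (g₂ ∘ g₁)) ≤ #(missed g₂) + #(missed g₁) :=
  calc #(missed (g₂ ∘ g₁)) ≤ #(missed g₂ ∪ (missed g₁).image g₂) := by
        refine card_le_card fun c hc => ?_
        simp only [missed, mem_union, mem_sdiff, mem_univ, mem_image, true_and, comp_apply,
          not_exists] at hc ⊢
        by_cases hc₂ : ∃ b, g₂ b = c
        · obtain ⟨b, rfl⟩ := hc₂
          exact Or.inr ⟨b, fun a hab => hc a (by rw [hab]), rfl⟩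
        · exact Or.inl (not_exists.mp hc₂)
    _ ≤ #(missed g₂) + #(missed g₁) := (card_union_le _ _).trans (by gcongr; exact card_image_le)

lemma wgt_comp_le_of_injective {g₁ : Y₁ → Y₂} (hg₁ : Injective g₁) (g₂ : Y₂ → Y₃) :
    wgt R₁ R₃ (g₂ ∘ g₁) ≤ wgt R₁ R₂ g₁ + wgt R₂ R₃ g₂ := by
  refine (wgt_le_iff R₁ R₃).mpr fun x => ?_
  have := card_mismatches_comp_le_of_injective R₁ R₂ R₃ hg₁ g₂ x
  have := card_missed_comp_le g₁ g₂
  have := card_missed_add_card_mismatches_le_wgt R₁ R₂ g₁ x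
  have := card_missed_add_card_mismatches_le_wgt R₂ R₃ g₂ x
  omega

omit [DecidableEq Y₂] in
lemma wgt_comp_invFun_le [DecidableEq Y₁] [Nonempty Y₂] {g : Y₂ → Y₁} (hg : Injective g)
    (g₂ : Y₂ → Y₃) :
    wgt R₁ R₃ (g₂ ∘ invFun g) ≤ wgt R₂ R₁ g + wgt R₂ R₃ g₂ := by
  refine (wgt_le_iff R₁ R₃).mpr fun x => ?_
  have hmissed : missed (g₂ ∘ invFun g) ⊆ missed g₂ := by
    intro c hc
    simp only [missed, mem_sdiff, mem_univ, mem_image, true_and, comp_apply,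
      not_exists] at hc ⊢
    exact fun b hb => hc (g b) (by rw [leftInverse_invFun hg b, hb])
  have := card_mismatches_comp_invFun_le R₁ R₂ R₃ hg g₂ x
  have := card_le_card hmissed
  have := card_missed_add_card_mismatches_le_wgt R₂ R₁ g x
  have := card_missed_add_card_mismatches_le_wgt R₂ R₃ g₂ x
  omega

end Weight

section Distance

variable {X Y₁ Y₂ Y₃ : Type*} [Fintype X] [Fintype Y₁] [Fintype Y₂] [Fintype Y₃]
  [DecidableEq Y₁] [DecidableEq Y₂] [DecidableEq Y₃]
  (R₁ : X → Y₁ → Bool) (R₂ : X → Y₂ → Bool) (R₃ : X → Y₃ → Bool)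

lemma ddist_comm : ddist R₁ R₂ = ddist R₂ R₁ :=
  max_comm _ _

lemma ddist_le {n : ℕ} {g : Y₁ → Y₂} {g' : Y₂ → Y₁} (h : wgt R₁ R₂ g ≤ n)
    (h' : wgt R₂ R₁ g' ≤ n) : ddist R₁ R₂ ≤ n :=
  max_le ((Nat.sInf_le (by exact ⟨g, rfl⟩)).trans h) ((Nat.sInf_le (by exact ⟨g', rfl⟩)).trans h')

lemma ddist_self : ddist R₁ R₁ = 0 :=
  Nat.le_zero.mp (ddist_le R₁ R₁ (wgt_id R₁).le (wgt_id R₁).le)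

lemma exists_wgt_le_ddist [Nonempty Y₂] : ∃ g : Y₁ → Y₂, wgt R₁ R₂ g ≤ ddist R₁ R₂ := by
  obtain ⟨g, hg⟩ := Nat.sInf_mem (s := {n | ∃ g : Y₁ → Y₂, n = wgt R₁ R₂ g})
    ⟨_, fun _ => Classical.arbitrary Y₂, rfl⟩
  exact ⟨g, hg ▸ le_max_left _ _⟩

lemma exists_wgt_le_ddist_add_ddist [Nonempty Y₁] [Nonempty Y₂] [Nonempty Y₃] :
    ∃ g : Y₁ → Y₃, wgt R₁ R₃ g ≤ ddist R₁ R₂ + ddist R₂ R₃ := by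
  obtain ⟨g₂, hg₂⟩ := exists_wgt_le_ddist R₂ R₃
  rcases le_total (Fintype.card Y₁) (Fintype.card Y₂) with hcard | hcard
  · obtain ⟨g, hg⟩ := exists_wgt_le_ddist R₁ R₂
    obtain ⟨g₁, hinj, hle⟩ := exists_injective_wgt_le R₁ R₂ hcard g
    exact ⟨g₂ ∘ g₁, (wgt_comp_le_of_injective R₁ R₂ R₃ hinj g₂).trans
      (add_le_add (hle.trans hg) hg₂)⟩
  · obtain ⟨g, hg⟩ := exists_wgt_le_ddist R₂ R₁
    obtain ⟨g₁, hinj, hle⟩ := exists_injective_wgt_le R₂ R₁ hcard g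
    exact ⟨g₂ ∘ invFun g₁, (wgt_comp_invFun_le R₁ R₂ R₃ hinj g₂).trans
      (add_le_add ((hle.trans hg).trans (ddist_comm R₂ R₁).le) hg₂)⟩

lemma ddist_triangle [Nonempty Y₁] [Nonempty Y₂] [Nonempty Y₃] :
    ddist R₁ R₃ ≤ ddist R₁ R₂ + ddist R₂ R₃ := by
  obtain ⟨g, hg⟩ := exists_wgt_le_ddist_add_ddist R₁ R₂ R₃
  obtain ⟨g', hg'⟩ := exists_wgt_le_ddist_add_ddist R₃ R₂ R₁
  rw [ddist_comm R₃ R₂, ddist_comm R₂ R₁, add_comm] at hg'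
  exact ddist_le R₁ R₃ hg hg'

end Distance

theorem ddist_pseudometric_general {X Y₁ Y₂ Y₃ : Type*} [Fintype X]
    [Fintype Y₁] [Fintype Y₂] [Fintype Y₃]
    [DecidableEq Y₁] [DecidableEq Y₂] [DecidableEq Y₃]
    [Nonempty Y₁] [Nonempty Y₂] [Nonempty Y₃]
    (R₁ : X → Y₁ → Bool) (R₂ : X → Y₂ → Bool) (R₃ : X → Y₃ → Bool) :
    0 ≤ ddist R₁ R₂ ∧
    ddist R₁ R₂ = ddist R₂ R₁ ∧
    ddist R₁ R₁ = 0 ∧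
    ddist R₁ R₃ ≤ ddist R₁ R₂ + ddist R₂ R₃ :=
  ⟨Nat.zero_le _, ddist_comm R₁ R₂, ddist_self R₁, ddist_triangle R₁ R₂ R₃⟩

/-- The relation distance is a pseudometric: nonnegative, symmetric, reflexive,
and it satisfies the triangle inequality. -/
theorem ddist_pseudometric {X Y₁ Y₂ Y₃ : Type*} [Fintype X] [Nonempty X]
    [Fintype Y₁] [Fintype Y₂] [Fintype Y₃]
    [DecidableEq Y₁] [DecidableEq Y₂] [DecidableEq Y₃]
    [Nonempty Y₁] [Nonempty Y₂] [Nonempty Y₃]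
    (R₁ : X → Y₁ → Bool) (R₂ : X → Y₂ → Bool) (R₃ : X → Y₃ → Bool) :
    0 ≤ ddist R₁ R₂ ∧
    ddist R₁ R₂ = ddist R₂ R₁ ∧
    ddist R₁ R₁ = 0 ∧
    ddist R₁ R₃ ≤ ddist R₁ R₂ + ddist R₂ R₃ :=
  ddist_pseudometric_general R₁ R₂ R₃
end

section
/- If Y₁ and Y₂ have the same (finite, positive) cardinality, then the minimum of w(g | r₁, r₂) over all functions g: Y₁ → Y₂ is achieved by some bijection φ: Y₁ → Y₂; in particular the relation distance can be computed by minimizing only over bijections in each direction. -/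
lemma exists_bij_wgt_le {X Y₁ Y₂ : Type*} [Fintype X] [Fintype Y₁] [Fintype Y₂]
    [DecidableEq Y₁] [DecidableEq Y₂]
    (R₁ : X → Y₁ → Bool) (R₂ : X → Y₂ → Bool)
    (hcard : Fintype.card Y₁ = Fintype.card Y₂) :
    ∀ n (g : Y₁ → Y₂), (Finset.univ \ Finset.image g Finset.univ).card = n →
      ∃ φ : Y₁ → Y₂, Function.Bijective φ ∧ wgt R₁ R₂ φ ≤ wgt R₁ R₂ g := by
  intro n
  induction n using Nat.strong_induction_on with
  | _ n ih =>
    intro g hg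
    rcases Nat.eq_zero_or_pos n with h0 | hposn
    · have hempty : (Finset.univ \ Finset.image g Finset.univ) = ∅ := by
        rw [← Finset.card_eq_zero, hg, h0]
      have hsurj : Function.Surjective g := by
        intro z
        have hz : z ∈ Finset.image g Finset.univ := by
          by_contra hz
          have : z ∈ Finset.univ \ Finset.image g Finset.univ := by simp [hz]
          rw [hempty] at this
          exact absurd this (Finset.notMem_empty z)
        obtain ⟨y, _, hy⟩ := Finset.mem_image.mp hz
        exact ⟨y, hy⟩
      exact ⟨g, (Fintype.bijective_iff_surjective_and_card g).mpr ⟨hsurj, hcard⟩, le_rfl⟩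
    · -- there is a missing element z
      have hne : (Finset.univ \ Finset.image g Finset.univ).Nonempty :=
        Finset.card_pos.mp (hg ▸ hposn)
      obtain ⟨z, hz⟩ := hne
      have hznot : z ∉ Finset.image g Finset.univ := (Finset.mem_sdiff.mp hz).2
      have hnotsurj : ¬ Function.Surjective g := by
        intro hs
        obtain ⟨y, hy⟩ := hs z
        exact hznot (Finset.mem_image.mpr ⟨y, Finset.mem_univ y, hy⟩)
      have hnotinj : ¬ Function.Injective g := by
        intro hi
        exact hnotsurj ((Fintype.bijective_iff_injective_and_card g).mpr ⟨hi, hcard⟩).2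
      obtain ⟨y₁, y₂, hgy, hne12⟩ := Function.not_injective_iff.mp hnotinj
      set g' : Y₁ → Y₂ := Function.update g y₁ z with hg'def
      have himg : Finset.image g Finset.univ ⊆ Finset.image g' Finset.univ := by
        intro w hw
        obtain ⟨y, _, hy⟩ := Finset.mem_image.mp hw
        by_cases hyy : y = y₁
        · refine Finset.mem_image.mpr ⟨y₂, Finset.mem_univ _, ?_⟩
          have h2 : g' y₂ = g y₂ := by
            rw [hg'def]; exact Function.update_of_ne (Ne.symm hne12) _ _
          rw [h2, ← hgy, ← hyy, hy]
        · refine Finset.mem_image.mpr ⟨y, Finset.mem_univ _, ?_⟩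
          have h2 : g' y = g y := by
            rw [hg'def]; exact Function.update_of_ne hyy _ _
          rw [h2, hy]
      have hzimg : z ∈ Finset.image g' Finset.univ :=
        Finset.mem_image.mpr ⟨y₁, Finset.mem_univ _, by rw [hg'def]; exact Function.update_self _ _ _⟩
      have hsub : (Finset.univ \ Finset.image g' Finset.univ) ⊆
          (Finset.univ \ Finset.image g Finset.univ).erase z := by
        intro w hw
        obtain ⟨-, hw2⟩ := Finset.mem_sdiff.mp hw
        refine Finset.mem_erase.mpr ⟨?_, Finset.mem_sdiff.mpr ⟨Finset.mem_univ _, ?_⟩⟩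
        · rintro rfl; exact hw2 hzimg
        · exact fun h => hw2 (himg h)
      have hcard' : (Finset.univ \ Finset.image g' Finset.univ).card < n := by
        calc (Finset.univ \ Finset.image g' Finset.univ).card
            ≤ ((Finset.univ \ Finset.image g Finset.univ).erase z).card :=
              Finset.card_le_card hsub
          _ < (Finset.univ \ Finset.image g Finset.univ).card :=
              Finset.card_erase_lt_of_mem hz
          _ = n := hg
      obtain ⟨φ, hφbij, hφle⟩ := ih _ hcard' g' rfl
      refine ⟨φ, hφbij, le_trans hφle ?_⟩
      -- wgt g' ≤ wgt g
      unfold wgt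
      apply Finset.sup_le
      intro x _
      have hmiss : (Finset.univ \ Finset.image g' Finset.univ).card + 1
          ≤ (Finset.univ \ Finset.image g Finset.univ).card := by
        calc (Finset.univ \ Finset.image g' Finset.univ).card + 1
            ≤ ((Finset.univ \ Finset.image g Finset.univ).erase z).card + 1 := by
              exact Nat.add_le_add_right (Finset.card_le_card hsub) 1
          _ = (Finset.univ \ Finset.image g Finset.univ).card := by
              rw [Finset.card_erase_of_mem hz]
              exact Nat.succ_pred_eq_of_pos (hg ▸ hposn)
      have hmis : (Finset.univ.filter (fun y : Y₁ => R₁ x y ≠ R₂ x (g' y))).card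
          ≤ (Finset.univ.filter (fun y : Y₁ => R₁ x y ≠ R₂ x (g y))).card + 1 := by
        have hsub2 : (Finset.univ.filter (fun y : Y₁ => R₁ x y ≠ R₂ x (g' y)))
            ⊆ insert y₁ (Finset.univ.filter (fun y : Y₁ => R₁ x y ≠ R₂ x (g y))) := by
          intro y hy
          by_cases hyy : y = y₁
          · exact Finset.mem_insert.mpr (Or.inl hyy)
          · refine Finset.mem_insert.mpr (Or.inr ?_)
            have := (Finset.mem_filter.mp hy).2
            rw [show g' y = g y by rw [hg'def]; exact Function.update_of_ne hyy _ _] at this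
            exact Finset.mem_filter.mpr ⟨Finset.mem_univ _, this⟩
        calc _ ≤ (insert y₁ (Finset.univ.filter (fun y : Y₁ => R₁ x y ≠ R₂ x (g y)))).card :=
              Finset.card_le_card hsub2
          _ ≤ _ := Finset.card_insert_le _ _
      have : (Finset.univ \ Finset.image g' Finset.univ).card
          + (Finset.univ.filter (fun y : Y₁ => R₁ x y ≠ R₂ x (g' y))).card
          ≤ (Finset.univ \ Finset.image g Finset.univ).card
          + (Finset.univ.filter (fun y : Y₁ => R₁ x y ≠ R₂ x (g y))).card := by omega
      exact le_trans this (Finset.le_sup (f := fun x : X => (Finset.univ \ Finset.image g Finset.univ).card + (Finset.univ.filter (fun y : Y₁ => R₁ x y ≠ R₂ x (g y))).card) (Finset.mem_univ x))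


/-- If `#Y₁ = #Y₂ > 0`, the minimum weight over all functions is achieved by a bijection;
in particular the distance may be computed by minimizing over bijections in each direction. -/
theorem min_weight_achieved_by_bijection {X Y₁ Y₂ : Type*} [Fintype X]
    [Fintype Y₁] [Fintype Y₂] [DecidableEq Y₁] [DecidableEq Y₂]
    (R₁ : X → Y₁ → Bool) (R₂ : X → Y₂ → Bool)
    (hcard : Fintype.card Y₁ = Fintype.card Y₂) (hpos : 0 < Fintype.card Y₁) :
    (∃ φ : Y₁ → Y₂, Function.Bijective φ ∧
      wgt R₁ R₂ φ = sInf {n | ∃ g : Y₁ → Y₂, n = wgt R₁ R₂ g}) ∧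
    ddist R₁ R₂ =
      max (sInf {n | ∃ φ : Y₁ → Y₂, Function.Bijective φ ∧ n = wgt R₁ R₂ φ})
          (sInf {n | ∃ ψ : Y₂ → Y₁, Function.Bijective ψ ∧ n = wgt R₂ R₁ ψ}) := by
  have hY₂pos : 0 < Fintype.card Y₂ := hcard ▸ hpos
  have hY₁ : Nonempty Y₁ := Fintype.card_pos_iff.mp hpos
  have hY₂ : Nonempty Y₂ := Fintype.card_pos_iff.mp hY₂pos
  -- direction 1
  have hS₁ : {n | ∃ g : Y₁ → Y₂, n = wgt R₁ R₂ g}.Nonempty :=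
    ⟨wgt R₁ R₂ (fun _ => Classical.arbitrary Y₂), ⟨_, rfl⟩⟩
  obtain ⟨g₀, hg₀⟩ := Nat.sInf_mem hS₁
  obtain ⟨φ, hφbij, hφle⟩ := exists_bij_wgt_le R₁ R₂ hcard _ g₀ rfl
  have hφeq : wgt R₁ R₂ φ = sInf {n | ∃ g : Y₁ → Y₂, n = wgt R₁ R₂ g} := by
    refine le_antisymm ?_ (Nat.sInf_le ⟨φ, rfl⟩)
    rw [hg₀]; exact hφle
  have hS₂ : {n | ∃ g : Y₂ → Y₁, n = wgt R₂ R₁ g}.Nonempty :=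
    ⟨wgt R₂ R₁ (fun _ => Classical.arbitrary Y₁), ⟨_, rfl⟩⟩
  obtain ⟨g₁, hg₁⟩ := Nat.sInf_mem hS₂
  obtain ⟨ψ, hψbij, hψle⟩ := exists_bij_wgt_le R₂ R₁ hcard.symm _ g₁ rfl
  have hψeq : wgt R₂ R₁ ψ = sInf {n | ∃ g : Y₂ → Y₁, n = wgt R₂ R₁ g} := by
    refine le_antisymm ?_ (Nat.sInf_le ⟨ψ, rfl⟩)
    rw [hg₁]; exact hψle
  refine ⟨⟨φ, hφbij, hφeq⟩, ?_⟩
  have h1 : sInf {n | ∃ g : Y₁ → Y₂, n = wgt R₁ R₂ g}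
      = sInf {n | ∃ φ : Y₁ → Y₂, Function.Bijective φ ∧ n = wgt R₁ R₂ φ} := by
    refine le_antisymm ?_ ?_
    · obtain ⟨χ, hχb, hχ⟩ := Nat.sInf_mem (⟨wgt R₁ R₂ φ, φ, hφbij, rfl⟩ :
        {n | ∃ φ : Y₁ → Y₂, Function.Bijective φ ∧ n = wgt R₁ R₂ φ}.Nonempty)
      exact hχ ▸ Nat.sInf_le ⟨χ, hχ.symm ▸ hχ⟩
    · rw [← hφeq]; exact Nat.sInf_le ⟨φ, hφbij, rfl⟩
  have h2 : sInf {n | ∃ g : Y₂ → Y₁, n = wgt R₂ R₁ g}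
      = sInf {n | ∃ ψ : Y₂ → Y₁, Function.Bijective ψ ∧ n = wgt R₂ R₁ ψ} := by
    refine le_antisymm ?_ ?_
    · obtain ⟨χ, hχb, hχ⟩ := Nat.sInf_mem (⟨wgt R₂ R₁ ψ, ψ, hψbij, rfl⟩ :
        {n | ∃ ψ : Y₂ → Y₁, Function.Bijective ψ ∧ n = wgt R₂ R₁ ψ}.Nonempty)
      exact hχ ▸ Nat.sInf_le ⟨χ, hχ.symm ▸ hχ⟩
    · rw [← hψeq]; exact Nat.sInf_le ⟨ψ, hψbij, rfl⟩
  rw [ddist, h1, h2]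
end

section
/- For relations R and R' on the same pair of finite sets X and Y, and for any subset σ ⊆ X, the total weights satisfy |t_R(σ) − t_{R'}(σ)| ≤ d((Y,R),(Y,R'))·#σ, where t_R(σ) := #{y ∈ Y : (x,y) ∈ R for all x ∈ σ} (interpreted as 0 if σ is not a simplex of the corresponding Dowker complex). -/
/-- Total weight of a simplex `σ ⊆ X` for a relation `R`. -/
def totalWeight {X Y : Type*} [Fintype Y] (R : X → Y → Bool) (σ : Finset X) : ℕ :=
  (Finset.univ.filter (fun y : Y => ∀ x ∈ σ, R x y = true)).card

lemma image_defect {Y : Type*} [Fintype Y] [DecidableEq Y] (g : Y → Y) (s : Finset Y) :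
    s.card ≤ (s.image g).card + (Finset.univ \ Finset.univ.image g).card := by
  have h1 : (Finset.univ.image g).card ≤ (s.image g).card + sᶜ.card := by
    have hsub : Finset.univ.image g ⊆ s.image g ∪ sᶜ.image g := by
      intro z hz
      obtain ⟨y, -, rfl⟩ := Finset.mem_image.1 hz
      by_cases hy : y ∈ s
      · exact Finset.mem_union_left _ (Finset.mem_image_of_mem g hy)
      · exact Finset.mem_union_right _ (Finset.mem_image_of_mem g (by simpa using hy))
    calc (Finset.univ.image g).card ≤ (s.image g ∪ sᶜ.image g).card := Finset.card_le_card hsub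
      _ ≤ (s.image g).card + (sᶜ.image g).card := Finset.card_union_le (s.image g) (sᶜ.image g)
      _ ≤ (s.image g).card + sᶜ.card := Nat.add_le_add_left Finset.card_image_le _
  have h2 : (Finset.univ \ Finset.univ.image g).card + (Finset.univ.image g).card
      = Fintype.card Y := by
    rw [Finset.card_sdiff_add_card_eq_card (Finset.subset_univ _)]
    rfl
  have h3 : s.card + sᶜ.card = Fintype.card Y := by
    simpa using Finset.card_add_card_compl s
  omega

lemma key {X Y : Type*} [Fintype X] [Fintype Y] [DecidableEq Y]
    (R1 R2 : X → Y → Bool) (σ : Finset X) (g : Y → Y) :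
    totalWeight R1 σ ≤ totalWeight R2 σ + wgt R1 R2 g * σ.card := by
  rcases σ.eq_empty_or_nonempty with rfl | ⟨x0, hx0⟩
  · simp [totalWeight]
  set A := Finset.univ.filter (fun y : Y => ∀ x ∈ σ, R1 x y = true) with hA
  set B := Finset.univ.filter (fun y : Y => ∀ x ∈ σ, R2 x y = true) with hB
  set D := (Finset.univ \ Finset.univ.image g).card with hD
  set M := fun x : X => (Finset.univ.filter (fun y : Y => R1 x y ≠ R2 x (g y))).card with hM
  have step1 : A.card ≤ (A.image g).card + D := image_defect g A
  have step2 : (A.image g).card ≤ B.card + ∑ x ∈ σ, M x := by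
    have hsub : A.image g ⊆ B ∪ σ.biUnion
        (fun x => (Finset.univ.filter (fun y : Y => R1 x y ≠ R2 x (g y))).image g) := by
      intro z hz
      obtain ⟨y, hy, rfl⟩ := Finset.mem_image.1 hz
      rw [hA, Finset.mem_filter] at hy
      by_cases hzB : g y ∈ B
      · exact Finset.mem_union_left _ hzB
      · rw [hB, Finset.mem_filter] at hzB
        push_neg at hzB
        obtain ⟨x, hxσ, hx⟩ := hzB (Finset.mem_univ _)
        refine Finset.mem_union_right _ (Finset.mem_biUnion.2 ⟨x, hxσ, ?_⟩)
        refine Finset.mem_image_of_mem g (Finset.mem_filter.2 ⟨Finset.mem_univ _, ?_⟩)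
        rw [hy.2 x hxσ]
        simp [hx]
    calc (A.image g).card ≤ (B ∪ _).card := Finset.card_le_card hsub
      _ ≤ B.card + _ := Finset.card_union_le _ _
      _ ≤ B.card + ∑ x ∈ σ, M x := by
          gcongr
          refine le_trans (Finset.card_biUnion_le) ?_
          exact Finset.sum_le_sum fun x _ => Finset.card_image_le
  have step3 : D + ∑ x ∈ σ, M x ≤ ∑ x ∈ σ, (D + M x) := by
    rw [Finset.sum_add_distrib]
    have : D ≤ ∑ _x ∈ σ, D := Finset.single_le_sum (fun _ _ => Nat.zero_le D) hx0
    omega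
  have step4 : ∑ x ∈ σ, (D + M x) ≤ wgt R1 R2 g * σ.card := by
    have hle : ∀ x ∈ σ, D + M x ≤ wgt R1 R2 g := fun x _ =>
      Finset.le_sup (f := fun x : X => (Finset.univ \ Finset.image g Finset.univ).card
        + (Finset.univ.filter (fun y : Y => R1 x y ≠ R2 x (g y))).card) (Finset.mem_univ x)
    calc ∑ x ∈ σ, (D + M x) ≤ ∑ _x ∈ σ, wgt R1 R2 g := Finset.sum_le_sum hle
      _ = σ.card * wgt R1 R2 g := by rw [Finset.sum_const, smul_eq_mul]
      _ = wgt R1 R2 g * σ.card := mul_comm _ _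
  have e1 : totalWeight R1 σ = A.card := rfl
  have e2 : totalWeight R2 σ = B.card := rfl
  omega

/-- The pseudometric bounds the difference in total weights:
`|t_R(σ) − t_{R'}(σ)| ≤ d((Y,R),(Y,R'))·#σ`. -/
theorem totalWeight_diff_le {X Y : Type*} [Fintype X] [Fintype Y] [DecidableEq Y]
    (R R' : X → Y → Bool) (σ : Finset X) :
    |(totalWeight R σ : ℤ) - (totalWeight R' σ : ℤ)| ≤ (ddist R R' : ℤ) * σ.card := by
  have h1 : {n | ∃ g : Y → Y, n = wgt R R' g}.Nonempty := ⟨wgt R R' id, id, rfl⟩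
  have h2 : {n | ∃ g : Y → Y, n = wgt R' R g}.Nonempty := ⟨wgt R' R id, id, rfl⟩
  obtain ⟨g, hg⟩ := Nat.sInf_mem h1
  obtain ⟨g', hg'⟩ := Nat.sInf_mem h2
  have hw : wgt R R' g ≤ ddist R R' := hg ▸ le_max_left _ _
  have hw' : wgt R' R g' ≤ ddist R R' := hg' ▸ le_max_right _ _
  have hA : totalWeight R σ ≤ totalWeight R' σ + ddist R R' * σ.card :=
    le_trans (key R R' σ g) (by gcongr)
  have hB : totalWeight R' σ ≤ totalWeight R σ + ddist R R' * σ.card :=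
    le_trans (key R' R σ g') (by gcongr)
  rw [abs_sub_le_iff]
  constructor
  · have : (totalWeight R σ : ℤ) ≤ totalWeight R' σ + (ddist R R' : ℤ) * σ.card := by
      exact_mod_cast hA
    linarith
  · have : (totalWeight R' σ : ℤ) ≤ totalWeight R σ + (ddist R R' : ℤ) * σ.card := by
      exact_mod_cast hB
    linarith
end

section
/- Two relations (X,Y,R) and (X,Y',R') over the same finite set X are isomorphic in Rel_X (there is a bijection φ: Y → Y' with (x,y)∈R ⟺ (x,φ(y))∈R' for all x) if and only if their relation distance d is zero. That is, d is a metric on isomorphism classes. -/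
lemma wgt_eq_zero_of {X Y1 Y2 : Type*} [Fintype X] [Fintype Y1] [Fintype Y2] [DecidableEq Y2]
    (R1 : X → Y1 → Bool) (R2 : X → Y2 → Bool) (g : Y1 → Y2)
    (hs : Function.Surjective g) (h : ∀ x y, R1 x y = R2 x (g y)) :
    wgt R1 R2 g = 0 := by
  rw [wgt, ← Nat.le_zero, Finset.sup_le_iff]
  intro x _
  have h1 : Finset.univ \ Finset.image g Finset.univ = (∅ : Finset Y2) := by
    rw [Finset.sdiff_eq_empty_iff_subset]
    intro y _
    obtain ⟨z, hz⟩ := hs y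
    exact Finset.mem_image.mpr ⟨z, Finset.mem_univ z, hz⟩
  have h2 : Finset.univ.filter (fun y : Y1 => R1 x y ≠ R2 x (g y)) = ∅ := by
    rw [Finset.filter_eq_empty_iff]
    intro y _
    simp [h x y]
  simp [h1, h2]

lemma wgt_eq_zero_surj {X Y1 Y2 : Type*} [Fintype X] [Nonempty X] [Fintype Y1] [Fintype Y2]
    [DecidableEq Y2]
    (R1 : X → Y1 → Bool) (R2 : X → Y2 → Bool) (g : Y1 → Y2)
    (h : wgt R1 R2 g = 0) :
    Function.Surjective g ∧ ∀ x y, R1 x y = R2 x (g y) := by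
  rw [wgt, ← Nat.le_zero, Finset.sup_le_iff] at h
  constructor
  · intro y
    obtain ⟨x⟩ := ‹Nonempty X›
    have := h x (Finset.mem_univ x)
    simp only [Nat.le_zero, Nat.add_eq_zero, Finset.card_eq_zero,
      Finset.sdiff_eq_empty_iff_subset] at this
    have := this.1 (Finset.mem_univ y)
    obtain ⟨z, _, hz⟩ := Finset.mem_image.mp this
    exact ⟨z, hz⟩
  · intro x y
    have := h x (Finset.mem_univ x)
    simp only [Nat.le_zero, Nat.add_eq_zero, Finset.card_eq_zero,
      Finset.filter_eq_empty_iff] at this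
    have := this.2 (Finset.mem_univ y)
    simpa using this

/-- Two relations over a common `X` are isomorphic in `Rel_X` iff their distance is zero:
`d` is a metric on isomorphism classes. -/
theorem iso_iff_ddist_eq_zero {X Y Y' : Type*} [Fintype X] [Nonempty X]
    [Fintype Y] [Fintype Y'] [DecidableEq Y] [DecidableEq Y']
    (R : X → Y → Bool) (R' : X → Y' → Bool) :
    (∃ φ : Y → Y', Function.Bijective φ ∧
      ∀ x y, R x y = true ↔ R' x (φ y) = true) ↔ ddist R R' = 0 := by
  constructor
  · rintro ⟨φ, hbij, hrel⟩
    have heq : ∀ x y, R x y = R' x (φ y) := by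
      intro x y
      have := hrel x y
      cases hb : R x y <;> cases hb' : R' x (φ y) <;> simp_all
    let e := Equiv.ofBijective φ hbij
    have h1 : wgt R R' φ = 0 :=
      wgt_eq_zero_of R R' φ hbij.surjective heq
    have h2 : wgt R' R e.symm = 0 := by
      apply wgt_eq_zero_of R' R e.symm e.symm.surjective
      intro x y
      have : φ (e.symm y) = y := e.apply_symm_apply y
      rw [heq x (e.symm y), this]
    rw [ddist]
    have i1 : sInf {n | ∃ g : Y → Y', n = wgt R R' g} = 0 :=
      Nat.sInf_eq_zero.mpr (Or.inl ⟨φ, h1.symm⟩)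
    have i2 : sInf {n | ∃ g : Y' → Y, n = wgt R' R g} = 0 :=
      Nat.sInf_eq_zero.mpr (Or.inl ⟨e.symm, h2.symm⟩)
    rw [i1, i2]; rfl
  · intro hd
    rw [ddist, Nat.max_eq_zero_iff] at hd
    obtain ⟨h1, h2⟩ := hd
    -- Show both sets are nonempty, i.e. functions exist
    have hS1 := Nat.sInf_eq_zero.mp h1
    have hS2 := Nat.sInf_eq_zero.mp h2
    rcases hS2 with h0 | hemp2
    · obtain ⟨g', hg'⟩ := h0
      obtain ⟨hgs', hge'⟩ := wgt_eq_zero_surj R' R g' hg'.symm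
      -- g' : Y' → Y surjective, so Y is nonempty if Y' is, and S1 nonempty
      rcases hS1 with h0' | hemp1
      · obtain ⟨g, hg⟩ := h0'
        obtain ⟨hgs, hge⟩ := wgt_eq_zero_surj R R' g hg.symm
        have hcard : Fintype.card Y = Fintype.card Y' :=
          le_antisymm (Fintype.card_le_of_surjective g' hgs')
            (Fintype.card_le_of_surjective g hgs)
        have hbij : Function.Bijective g :=
          (Fintype.bijective_iff_surjective_and_card g).mpr ⟨hgs, hcard⟩
        exact ⟨g, hbij, fun x y => by rw [hge x y]⟩
      · -- {n | ∃ g : Y → Y', ...} = ∅ means no function Y → Y', i.e. Y' empty, Y nonempty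
        exfalso
        rcases isEmpty_or_nonempty Y' with hY' | hY'
        · -- then Y is nonempty? If Y empty too, function exists
          rcases isEmpty_or_nonempty Y with hY | hY
          · exact Set.eq_empty_iff_forall_notMem.mp hemp1
              (wgt R R' (fun y => (hY.false y).elim)) ⟨_, rfl⟩
          · -- g' : Y' → Y surjective with Y' empty, Y nonempty: contradiction
            obtain ⟨y⟩ := hY
            obtain ⟨y', _⟩ := hgs' y
            exact hY'.false y'
        · obtain ⟨y'⟩ := hY'
          exact Set.eq_empty_iff_forall_notMem.mp hemp1
            (wgt R R' (fun _ => y')) ⟨_, rfl⟩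
    · -- {n | ∃ g : Y' → Y, ...} = ∅ means Y empty, Y' nonempty
      exfalso
      rcases isEmpty_or_nonempty Y with hY | hY
      · rcases isEmpty_or_nonempty Y' with hY' | hY'
        · exact Set.eq_empty_iff_forall_notMem.mp hemp2
            (wgt R' R (fun y' => (hY'.false y').elim)) ⟨_, rfl⟩
        · -- Y empty, Y' nonempty: then S1 is nonempty (function from empty Y),
          -- and its inf 0 gives surjective g : Y → Y', contradiction
          rcases hS1 with h0' | hemp1
          · obtain ⟨g, hg⟩ := h0'
            obtain ⟨hgs, _⟩ := wgt_eq_zero_surj R R' g hg.symm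
            obtain ⟨y'⟩ := hY'
            obtain ⟨y, _⟩ := hgs y'
            exact hY.false y
          · exact Set.eq_empty_iff_forall_notMem.mp hemp1
              (wgt R R' (fun y => (hY.false y).elim)) ⟨_, rfl⟩
      · obtain ⟨y⟩ := hY
        exact Set.eq_empty_iff_forall_notMem.mp hemp2
          (wgt R' R (fun _ => y)) ⟨_, rfl⟩
end
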